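/- Suppose Supp(f₊) ⊂ [γ, 1] and Supp(f₋) ⊂ [−1, −γ] for some γ ∈ (0,1), where f± are probability densities, and define g±^σ(x) = λ± (f± * K_σ)(x) for constants λ± > 0 and the Gaussian kernel K_σ. Then for every x < −1, g₊^σ(x)/(g₊^σ(x) + g₋^σ(x)) ≤ (λ₊/λ₋) e^{−2γ|x|/σ²}. -/

import Mathlib

open MeasureTheory

/-!
On `(-∞, 0)` the Gaussian kernel is increasing, so against a probability density supported in
`[γ, 1]` the convolution at `x < -1` is at most `K_σ(x - γ)`, while against one supported in
`[-1, -γ]` it is at least `K_σ(x + γ)`. Hence `g₊/(g₊ + g₋) ≤ g₊/g₋ ≤ (λ₊/λ₋) K_σ(x - γ)/K_σ(x + γ)`,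
and the ratio of the two Gaussian values is exactly `exp(2γx/σ²)`.
-/

/-- The Gaussian kernel `K_σ`. -/
noncomputable def K (σ : ℝ) (x : ℝ) : ℝ :=
  Real.exp (-x^2 / (2 * σ^2)) / Real.sqrt (2 * Real.pi * σ^2)

section Averaging

variable {α : Type*} [MeasurableSpace α] {μ : Measure α} {f φ : α → ℝ} {S : Set α} {c : ℝ}

theorem integral_mul_le_of_le_on_support (hf0 : ∀ s, 0 ≤ f s) (hfI : Integrable f μ)
    (hf1 : ∫ s, f s ∂μ = 1) (hsupp : ∀ s, s ∉ S → f s = 0)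
    (hφI : Integrable (fun s => f s * φ s) μ) (hφ : ∀ s ∈ S, φ s ≤ c) :
    ∫ s, f s * φ s ∂μ ≤ c := by
  calc ∫ s, f s * φ s ∂μ ≤ ∫ s, f s * c ∂μ := by
        refine integral_mono hφI (hfI.mul_const c) fun s => ?_
        by_cases hs : s ∈ S
        · exact mul_le_mul_of_nonneg_left (hφ s hs) (hf0 s)
        · simp [hsupp s hs]
    _ = c := by rw [integral_mul_const, hf1, one_mul]

theorem le_integral_mul_of_le_on_support (hf0 : ∀ s, 0 ≤ f s) (hfI : Integrable f μ)
    (hf1 : ∫ s, f s ∂μ = 1) (hsupp : ∀ s, s ∉ S → f s = 0)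
    (hφI : Integrable (fun s => f s * φ s) μ) (hφ : ∀ s ∈ S, c ≤ φ s) :
    c ≤ ∫ s, f s * φ s ∂μ := by
  have h := integral_mul_le_of_le_on_support (φ := fun s => -φ s) (c := -c) hf0 hfI hf1 hsupp
    (by simpa only [mul_neg] using hφI.fun_neg) fun s hs => neg_le_neg (hφ s hs)
  simp only [mul_neg, integral_neg] at h
  linarith

end Averaging

theorem div_add_le_div_of_le_of_le {a b A B : ℝ} (ha : 0 ≤ a) (haA : a ≤ A) (hB : 0 < B)
    (hBb : B ≤ b) : a / (a + b) ≤ A / B :=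
  (div_le_div_of_nonneg_left ha hB (by linarith)).trans (div_le_div_of_nonneg_right haA hB.le)

theorem K_pos {σ : ℝ} (hσ : σ ≠ 0) (y : ℝ) : 0 < K σ y :=
  div_pos (Real.exp_pos _) (Real.sqrt_pos.2 (by positivity))

section Kernel

variable (σ : ℝ)

theorem K_le_K_of_le_of_nonpos {y z : ℝ} (hyz : y ≤ z) (hz : z ≤ 0) : K σ y ≤ K σ z := by
  unfold K
  gcongr Real.exp (?_ / _) / _
  nlinarith

theorem abs_K_le (y : ℝ) : |K σ y| ≤ (Real.sqrt (2 * Real.pi * σ^2))⁻¹ := by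
  rw [K, div_eq_mul_inv, abs_mul, abs_of_pos (Real.exp_pos _),
    abs_of_nonneg (inv_nonneg.2 (Real.sqrt_nonneg _))]
  refine mul_le_of_le_one_left (inv_nonneg.2 (Real.sqrt_nonneg _)) (Real.exp_le_one_iff.2 ?_)
  exact div_nonpos_of_nonpos_of_nonneg (neg_nonpos.2 (sq_nonneg y)) (by positivity)

theorem MeasureTheory.Integrable.mul_K {f : ℝ → ℝ} (hf : Integrable f) (x : ℝ) :
    Integrable (fun s => f s * K σ (x - s)) :=
  hf.mul_bdd (Continuous.aestronglyMeasurable (by unfold K; fun_prop))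
    (Filter.Eventually.of_forall fun s => (abs_K_le σ (x - s)).trans_eq' (Real.norm_eq_abs _))

theorem K_sub_eq_K_add_mul_exp (x γ : ℝ) :
    K σ (x - γ) = K σ (x + γ) * Real.exp (2 * γ * x / σ^2) := by
  rw [K, K, div_mul_eq_mul_div, ← Real.exp_add]
  congr 2
  ring

end Kernel

/-- When the supports of `f₊` and `f₋` are separated by a margin `γ`, the
ratio `g₊/(g₊+g₋)` decays exponentially for `x < −1`. -/
theorem ratio_bound_separated (γ : ℝ) (hγ : γ ∈ Set.Ioo (0:ℝ) 1)
    (σ lamp lamm : ℝ) (hσ : 0 < σ) (hlp : 0 < lamp) (hlm : 0 < lamm)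
    (fp fm : ℝ → ℝ)
    (hfp0 : ∀ s, 0 ≤ fp s) (hfm0 : ∀ s, 0 ≤ fm s)
    (hfpI : Integrable fp) (hfmI : Integrable fm)
    (hfpint : ∫ s, fp s = 1) (hfmint : ∫ s, fm s = 1)
    (hfpsupp : ∀ s, s ∉ Set.Icc γ 1 → fp s = 0)
    (hfmsupp : ∀ s, s ∉ Set.Icc (-1) (-γ) → fm s = 0)
    (gp gm : ℝ → ℝ)
    (hgp : ∀ x, gp x = lamp * ∫ s, fp s * K σ (x - s))
    (hgm : ∀ x, gm x = lamm * ∫ s, fm s * K σ (x - s)) :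
    ∀ x < (-1 : ℝ), gp x / (gp x + gm x) ≤ (lamp / lamm) * Real.exp (-2 * γ * |x| / σ^2) := by
  obtain ⟨hγ0, hγ1⟩ := hγ
  intro x hx
  have hgp_le : gp x ≤ lamp * K σ (x - γ) := by
    rw [hgp]
    refine mul_le_mul_of_nonneg_left (integral_mul_le_of_le_on_support hfp0 hfpI hfpint hfpsupp
      (hfpI.mul_K σ x) fun s hs => K_le_K_of_le_of_nonpos σ ?_ ?_) hlp.le <;> linarith [hs.1]
  have hgm_ge : lamm * K σ (x + γ) ≤ gm x := by
    rw [hgm]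
    refine mul_le_mul_of_nonneg_left (le_integral_mul_of_le_on_support hfm0 hfmI hfmint hfmsupp
      (hfmI.mul_K σ x) fun s hs => K_le_K_of_le_of_nonpos σ ?_ ?_) hlm.le <;> linarith [hs.1, hs.2]
  have hgp_nonneg : 0 ≤ gp x := by
    rw [hgp]
    exact mul_nonneg hlp.le (integral_nonneg fun s => mul_nonneg (hfp0 s) (K_pos hσ.ne' _).le)
  have hKpos := K_pos hσ.ne' (x + γ)
  calc gp x / (gp x + gm x) ≤ lamp * K σ (x - γ) / (lamm * K σ (x + γ)) :=
        div_add_le_div_of_le_of_le hgp_nonneg hgp_le (by positivity) hgm_ge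
    _ = (lamp / lamm) * Real.exp (-2 * γ * |x| / σ^2) := by
        rw [K_sub_eq_K_add_mul_exp, abs_of_neg (by linarith : x < 0)]
        field_simp
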